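/- Let p > 3 be a prime with p ≡ 1 (mod 3), and let a, b ∈ ℚ_p be nonzero with |a|_p < |b|_p = 1 and b_0^{(p−1)/3} ≡ 1 (mod p), where b_0 is the first digit of b. Then the equation x³ + ax = b has exactly 3 solutions x in ℤ_p^*, i.e. the set {x ∈ ℚ_p : |x|_p = 1 and x³ + ax = b} has exactly 3 elements. -/

import Mathlib

/-!
Since `|a|_p < 1`, a unit solution of `x³ + a x = b` reduces modulo `p` to a cube root of the
first digit `b₀` in `𝔽_p`. Because `3 ∣ p - 1`, the criterion `b₀^((p-1)/3) = 1` makes `b₀` a cube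
in the cyclic group `𝔽_pˣ`, and `𝔽_p` contains the cube roots of unity, so `X³ - b₀` has three
distinct roots, all simple as `p ≠ 3`. Hensel's lemma lifts them to three distinct unit solutions,
and a cubic has no more roots than that.
-/

/-- `x0` is the first digit of the nonzero `p`-adic number `x`: the unique integer in
`{1, …, p-1}` congruent modulo `p` to the unit part `x* = x·|x|_p = x·p^{-v_p(x)}`. -/
def isFirstDigit (p : ℕ) [Fact p.Prime] (x : ℚ_[p]) (x0 : ℤ) : Prop :=
  1 ≤ x0 ∧ x0 ≤ (p : ℤ) - 1 ∧ ‖x * (p : ℚ_[p]) ^ (-x.valuation) - (x0 : ℚ_[p])‖ < 1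

open Polynomial Finset

theorem Polynomial.not_isRoot_derivative_X_pow_sub_C {R : Type*} [CommRing R] [IsDomain R]
    {n : ℕ} (hn : (n : R) ≠ 0) (a : R) {x : R} (hx : x ≠ 0) :
    ¬(derivative (X ^ n - C a)).IsRoot x := by
  simp [derivative_X_pow, hn, hx]

theorem IsCyclic.exists_pow_eq_of_pow_card_div_eq_one {G : Type*} [CommGroup G] [IsCyclic G]
    [Finite G] {n : ℕ} (hn : n ∣ Nat.card G) {x : G} (hx : x ^ (Nat.card G / n) = 1) :
    ∃ r, r ^ n = x := by
  have hle : (powMonoidHom n : G →* G).range ≤ (powMonoidHom (Nat.card G / n)).ker := by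
    rintro _ ⟨r, rfl⟩
    simp [← pow_mul, Nat.mul_div_cancel' hn, pow_card_eq_one']
  have hcard : Nat.card (powMonoidHom (Nat.card G / n) : G →* G).ker ≤
      Nat.card (powMonoidHom n : G →* G).range := by
    rw [card_powMonoidHom_ker, card_powMonoidHom_range, Nat.gcd_eq_right (Nat.div_dvd_of_dvd hn),
      Nat.gcd_eq_right hn]
  exact (Subgroup.eq_of_le_of_card_ge hle hcard).ge hx

theorem ZMod.card_nthRootsFinset {p : ℕ} [Fact p.Prime] {n : ℕ} (hn : n ∣ p - 1) {β : ZMod p}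
    (hβ : β ≠ 0) (h : β ^ ((p - 1) / n) = 1) : #(nthRootsFinset n β) = n := by
  have : NeZero (p - 1) := ⟨(Nat.sub_pos_of_lt (Fact.out : p.Prime).one_lt).ne'⟩
  have := HasEnoughRootsOfUnity.of_dvd (ZMod p) hn
  obtain ⟨ζ, hζ⟩ := HasEnoughRootsOfUnity.exists_primitiveRoot (ZMod p) n
  have hcard : Nat.card (ZMod p)ˣ = p - 1 := by rw [Nat.card_eq_fintype_card, ZMod.card_units]
  obtain ⟨r, hr⟩ := IsCyclic.exists_pow_eq_of_pow_card_div_eq_one (hcard ▸ hn)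
    (x := Units.mk0 β hβ) (by ext; rw [hcard]; simpa using h)
  classical
  rw [nthRootsFinset_def, Multiset.toFinset_card_of_nodup (hζ.nthRoots_nodup hβ),
    hζ.card_nthRoots, if_pos ⟨r, by simpa using congrArg Units.val hr⟩]

namespace PadicInt
variable {p : ℕ} [Fact p.Prime]

theorem toZMod_eq_zero_iff_norm_lt_one {x : ℤ_[p]} : toZMod x = 0 ↔ ‖x‖ < 1 := by
  rw [← RingHom.mem_ker, ker_toZMod, IsLocalRing.mem_maximalIdeal, mem_nonunits]

theorem norm_eq_one_iff_toZMod_ne_zero {x : ℤ_[p]} : ‖x‖ = 1 ↔ toZMod x ≠ 0 := by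
  rw [ne_eq, toZMod_eq_zero_iff_norm_lt_one, not_lt, (norm_le_one x).ge_iff_eq', eq_comm]

theorem exists_isRoot_toZMod_eq {F : ℤ_[p][X]} {s : ZMod p} (hs : (F.map toZMod).IsRoot s)
    (hs' : ¬(F.map toZMod).derivative.IsRoot s) : ∃ z, F.IsRoot z ∧ toZMod z = s := by
  set c : ℤ_[p] := (s.val : ℤ_[p])
  have hc : toZMod c = s := by simp [c]
  have hF' : ‖F.derivative.eval c‖ = 1 := by
    rwa [norm_eq_one_iff_toZMod_ne_zero, ← eval_map_apply, ← derivative_map, hc]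
  have hF : ‖F.eval c‖ < 1 := by
    rwa [← toZMod_eq_zero_iff_norm_lt_one, ← eval_map_apply, hc]
  obtain ⟨z, hz, hzc, -⟩ := hensels_lemma (F := F) (a := c) (by simpa [hF'] using hF)
  refine ⟨z, by simpa using hz, ?_⟩
  rw [coe_aeval_eq_eval, hF', ← toZMod_eq_zero_iff_norm_lt_one, map_sub, hc, sub_eq_zero] at hzc
  exact hzc

theorem card_le_ncard_setOf_norm_eq_one_aeval_eq_zero {F : ℤ_[p][X]} (hF : F ≠ 0)
    {T : Finset (ZMod p)}
    (hT : ∀ s ∈ T, s ≠ 0 ∧ (F.map toZMod).IsRoot s ∧ ¬(F.map toZMod).derivative.IsRoot s) :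
    #T ≤ {x : ℚ_[p] | ‖x‖ = 1 ∧ aeval x F = 0}.ncard := by
  choose! z hz hzs using fun s hs ↦ exists_isRoot_toZMod_eq (hT s hs).2.1 (hT s hs).2.2
  rw [← Set.ncard_coe_finset]
  refine Set.ncard_le_ncard_of_injOn (fun s ↦ (z s : ℚ_[p])) (fun s hs ↦ ⟨?_, ?_⟩) ?_ ?_
  · rw [← norm_def, norm_eq_one_iff_toZMod_ne_zero, hzs s hs]
    exact (hT s hs).1
  · rw [← algebraMap_apply, aeval_algebraMap_apply_eq_algebraMap_eval, (hz s hs).eq_zero,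
      map_zero]
  · intro s hs t ht hst
    rw [← hzs s hs, ← hzs t ht, Subtype.ext hst]
  · exact (F.rootSet_finite ℚ_[p]).subset fun x hx ↦ mem_rootSet.2 ⟨hF, hx.2⟩

theorem ncard_setOf_norm_eq_one_aeval_eq_zero_le {F : ℤ_[p][X]} (hF : F ≠ 0) :
    {x : ℚ_[p] | ‖x‖ = 1 ∧ aeval x F = 0}.ncard ≤ F.natDegree :=
  (Set.ncard_le_ncard (fun _ hx ↦ mem_rootSet.2 ⟨hF, hx.2⟩) (F.rootSet_finite _)).trans
    (ncard_rootSet_le F _)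

end PadicInt

theorem isFirstDigit.intCast_ne_zero {p : ℕ} [Fact p.Prime] {x : ℚ_[p]} {x0 : ℤ}
    (h : isFirstDigit p x x0) : (x0 : ZMod p) ≠ 0 := by
  obtain ⟨h1, h2, -⟩ := h
  rw [ne_eq, ZMod.intCast_zmod_eq_zero_iff_dvd]
  intro hdvd
  have := Int.le_of_dvd (by omega) hdvd
  omega

theorem isFirstDigit.norm_sub_lt_one {p : ℕ} [Fact p.Prime] {x : ℚ_[p]} {x0 : ℤ}
    (h : isFirstDigit p x x0) (hx : ‖x‖ = 1) : ‖x - x0‖ < 1 := by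
  have hv : x.valuation = 0 := by
    have hp : (p : ℝ) ≠ 1 := by exact_mod_cast (Fact.out : p.Prime).one_lt.ne'
    rw [Padic.norm_eq_zpow_neg_valuation (norm_ne_zero_iff.1 (hx ▸ one_ne_zero)),
      zpow_eq_one_iff_right₀ (Nat.cast_nonneg p) hp, neg_eq_zero] at hx
    exact hx
  simpa [hv] using h.2.2

theorem isFirstDigit.toZMod_eq {p : ℕ} [Fact p.Prime] {x : ℤ_[p]} {x0 : ℤ}
    (h : isFirstDigit p x x0) (hx : ‖x‖ = 1) : PadicInt.toZMod x = x0 := by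
  rw [← sub_eq_zero, ← map_intCast PadicInt.toZMod, ← map_sub,
    PadicInt.toZMod_eq_zero_iff_norm_lt_one, PadicInt.norm_def]
  exact_mod_cast h.norm_sub_lt_one hx

theorem cubic_three_unit_solutions_of_lt_general (p : ℕ) [Fact p.Prime] (hp : 3 < p)
    (hp3 : p % 3 = 1)
    (a b : ℚ_[p])
    (hab : ‖a‖ < ‖b‖) (hb1 : ‖b‖ = 1)
    (b0 : ℤ) (hb0 : isFirstDigit p b b0)
    (hres : Int.ModEq (p : ℤ) (b0 ^ ((p - 1) / 3)) 1) :
    {x : ℚ_[p] | ‖x‖ = 1 ∧ x ^ 3 + a * x = b}.ncard = 3 := by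
  obtain ⟨a, rfl⟩ : ∃ a' : ℤ_[p], (a' : ℚ_[p]) = a := ⟨⟨a, (hb1 ▸ hab).le⟩, rfl⟩
  obtain ⟨b, rfl⟩ : ∃ b' : ℤ_[p], (b' : ℚ_[p]) = b := ⟨⟨b, hb1.le⟩, rfl⟩
  set F : ℤ_[p][X] := X ^ 3 + C a * X - C b
  have hFdeg : F.natDegree = 3 := by simp only [F]; compute_degree!
  have hF0 : F ≠ 0 := fun h ↦ by simp [h] at hFdeg
  have ha0 : PadicInt.toZMod a = 0 :=
    PadicInt.toZMod_eq_zero_iff_norm_lt_one.2 (by simpa [hb1] using hab)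
  have hFmod : F.map PadicInt.toZMod = X ^ 3 - C (b0 : ZMod p) := by
    simp [F, ha0, hb0.toZMod_eq hb1]
  have hS : {x : ℚ_[p] | ‖x‖ = 1 ∧ x ^ 3 + a * x = b} = {x | ‖x‖ = 1 ∧ aeval x F = 0} := by
    ext x
    simp [F, sub_eq_zero, PadicInt.algebraMap_apply]
  have hβ : (b0 : ZMod p) ≠ 0 := hb0.intCast_ne_zero
  have hβ3 : (b0 : ZMod p) ^ ((p - 1) / 3) = 1 := by
    exact_mod_cast (ZMod.intCast_eq_intCast_iff _ _ _).2 hres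
  have h3 : ((3 : ℕ) : ZMod p) ≠ 0 := by
    rw [ne_eq, ZMod.natCast_eq_zero_iff]
    exact fun h ↦ (Nat.le_of_dvd three_pos h).not_gt hp
  rw [hS]
  refine le_antisymm ?_ ?_
  · exact hFdeg ▸ PadicInt.ncard_setOf_norm_eq_one_aeval_eq_zero_le hF0
  · rw [← ZMod.card_nthRootsFinset (n := 3) (by omega) hβ hβ3]
    refine PadicInt.card_le_ncard_setOf_norm_eq_one_aeval_eq_zero hF0 fun s hs ↦ ?_
    rw [mem_nthRootsFinset three_pos] at hs
    have hs0 : s ≠ 0 := by rintro rfl; exact hβ (by simpa using hs.symm)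
    exact ⟨hs0, by simp [hFmod, hs], hFmod ▸ not_isRoot_derivative_X_pow_sub_C h3 _ hs0⟩

theorem cubic_three_unit_solutions_of_lt (p : ℕ) [Fact p.Prime] (hp : 3 < p)
    (hp3 : p % 3 = 1)
    (a b : ℚ_[p]) (ha : a ≠ 0) (hb : b ≠ 0)
    (hab : ‖a‖ < ‖b‖) (hb1 : ‖b‖ = 1)
    (b0 : ℤ) (hb0 : isFirstDigit p b b0)
    (hres : Int.ModEq (p : ℤ) (b0 ^ ((p - 1) / 3)) 1) :
    {x : ℚ_[p] | ‖x‖ = 1 ∧ x ^ 3 + a * x = b}.ncard = 3 :=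
  cubic_three_unit_solutions_of_lt_general p hp hp3 a b hab hb1 b0 hb0 hres
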